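/- Let R be a binary relation on a set W, and let the propagation graph of R be the labelled directed graph with an edge (w, ◇, u) whenever wRu and an edge (u, ◆, w) whenever wRu. Suppose that for some fixed n, k, R satisfies ∀w,u,v (wRⁿu ∧ wRᵏv → uRv), and let G be the grammar {◇ ⟶ ◆ⁿ◇ᵏ, ◆ ⟶ ◆ᵏ◇ⁿ}. Then for all worlds x, z: if there is a propagation path π from x to z whose string s_π lies in L_G(◇), then xRz. -/
import Mathlib


inductive Ch : Type where
  | dia : Ch
  | bdia : Ch
deriving DecidableEq

def Ch.conv : Ch → Ch
  | .dia => .bdia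
  | .bdia => .dia

def strConv (s : List Ch) : List Ch := (s.map Ch.conv).reverse

abbrev GRule := Ch × List Ch

def Step (G : Set GRule) (s t : List Ch) : Prop :=
  ∃ s' t' c r, (c, r) ∈ G ∧ s = s' ++ [c] ++ t' ∧ t = s' ++ r ++ t'

def Derives (G : Set GRule) : List Ch → List Ch → Prop :=
  Relation.ReflTransGen (Step G)

def Lang (G : Set GRule) (s : List Ch) : Set (List Ch) := {t | Derives G s t}

def Edge {W : Type} (R : W → W → Prop) (w : W) (c : Ch) (u : W) : Prop :=
  match c with
  | .dia => R w u
  | .bdia => R u w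

inductive PPath {W : Type} (R : W → W → Prop) : W → List Ch → W → Prop where
  | nil (w : W) : PPath R w [] w
  | cons {w u z : W} {c : Ch} {s : List Ch} :
      Edge R w c u → PPath R u s z → PPath R w (c :: s) z

def Rpow {W : Type} (R : W → W → Prop) : ℕ → W → W → Prop
  | 0, w, u => w = u
  | n+1, w, u => ∃ v, R w v ∧ Rpow R n v u


lemma ppath_comp {W : Type} {R : W → W → Prop} {x y z : W} {a b : List Ch}
    (h1 : PPath R x a y) (h2 : PPath R y b z) : PPath R x (a ++ b) z := by
  induction h1 with
  | nil w => simpa using h2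
  | cons he _ ih => exact PPath.cons he (ih h2)

lemma ppath_split {W : Type} {R : W → W → Prop} {x z : W} {a b : List Ch}
    (h : PPath R x (a ++ b) z) : ∃ y, PPath R x a y ∧ PPath R y b z := by
  induction a generalizing x with
  | nil => exact ⟨x, PPath.nil x, by simpa using h⟩
  | cons c a' ih =>
    cases h with
    | cons he htl =>
      obtain ⟨y, h1, h2⟩ := ih htl
      exact ⟨y, PPath.cons he h1, h2⟩

lemma rpow_snoc {W : Type} {R : W → W → Prop} {m : ℕ} {w v u : W}
    (h : Rpow R m w v) (hr : R v u) : Rpow R (m+1) w u := by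
  induction m generalizing w with
  | zero => cases h; exact ⟨u, hr, rfl⟩
  | succ m ih =>
    obtain ⟨v', hv', h'⟩ := h
    exact ⟨v', hv', ih h'⟩

lemma ppath_bdia {W : Type} {R : W → W → Prop} {m : ℕ} {u w : W}
    (h : PPath R u (List.replicate m Ch.bdia) w) : Rpow R m w u := by
  induction m generalizing u with
  | zero => cases h; rfl
  | succ m ih =>
    rw [List.replicate_succ] at h
    cases h with
    | cons he htl => exact rpow_snoc (ih htl) he

lemma ppath_dia {W : Type} {R : W → W → Prop} {m : ℕ} {u w : W}
    (h : PPath R u (List.replicate m Ch.dia) w) : Rpow R m u w := by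
  induction m generalizing u with
  | zero => cases h; rfl
  | succ m ih =>
    rw [List.replicate_succ] at h
    cases h with
    | cons he htl => exact ⟨_, he, ih htl⟩

theorem propagation_dia_sound {W : Type} (R : W → W → Prop) (n k : ℕ)
    (hframe : ∀ w u v : W, Rpow R n w u → Rpow R k w v → R u v)
    (G : Set GRule)
    (hG : G = {(Ch.dia, List.replicate n Ch.bdia ++ List.replicate k Ch.dia),
               (Ch.bdia, List.replicate k Ch.bdia ++ List.replicate n Ch.dia)})
    (x z : W) (s : List Ch)
    (hpath : PPath R x s z) (hs : s ∈ Lang G [Ch.dia]) :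
    R x z := by
  subst hG
  suffices key : ∀ a b : List Ch, Derives _ a b → ∀ x z : W, PPath R x b z → PPath R x a z by
    have := key _ _ hs x z hpath
    cases this with
    | cons he htl => cases htl; exact he
  intro a b hd
  induction hd using Relation.ReflTransGen.head_induction_on with
  | refl => intro x z h; exact h
  | head hstep _ ih =>
    intro x z h
    have h' := ih x z h
    obtain ⟨s', t', c, r, hmem, heq1, heq2⟩ := hstep
    subst heq1; subst heq2
    rw [List.append_assoc] at h'
    obtain ⟨y, hy1, hy2⟩ := ppath_split (a := s') h'
    obtain ⟨v, hv1, hv2⟩ := ppath_split (a := r) hy2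
    rw [List.append_assoc]
    refine ppath_comp hy1 (ppath_comp (a := [c]) ?_ hv2)
    simp only [Set.mem_insert_iff, Set.mem_singleton_iff, Prod.mk.injEq] at hmem
    rcases hmem with ⟨h1, h2⟩ | ⟨h1, h2⟩
    · -- c = dia, r = replicate n bdia ++ replicate k dia
      subst h1; subst h2
      obtain ⟨w, hw1, hw2⟩ := ppath_split hv1
      have hn := ppath_bdia hw1
      have hk := ppath_dia hw2
      exact PPath.cons (show Edge R y Ch.dia v from hframe _ _ _ hn hk) (PPath.nil v)
    · subst h1; subst h2
      obtain ⟨w, hw1, hw2⟩ := ppath_split hv1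
      have hk := ppath_bdia hw1
      have hn := ppath_dia hw2
      exact PPath.cons (show Edge R y Ch.bdia v from hframe _ _ _ hn hk) (PPath.nil v)
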